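/- Let f ∈ ℤ[X] be a polynomial of degree m with all coefficients bounded in absolute value by H, and let α be a root of f. If μ is the minimal integer polynomial of α (primitive, dividing f in ℤ[X] up to content), then every coefficient of μ has absolute value at most H · 4^m. -/

import Mathlib

/-!
Write `f = μ * g` in `ℤ[X]`. The Mahler measure `M` is multiplicative and `M(g) ≥ 1` since `g` is
a nonzero integer polynomial, so `M(μ) ≤ M(f)`. Each coefficient of `μ` is bounded by a binomial
coefficient `≤ 2^m` times `M(μ)`, while `M(f)` is at most the sum of the absolute values of the
coefficients of `f`, i.e. `≤ (m + 1) H ≤ 2^m H`.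
-/

open Polynomial

namespace Polynomial

theorem mahlerMeasure_le_natDegree_add_one_mul {p : ℂ[X]} {H : ℝ} (h : ∀ i, ‖p.coeff i‖ ≤ H) :
    p.mahlerMeasure ≤ (p.natDegree + 1) * H := by
  have hH : 0 ≤ H := (norm_nonneg _).trans (h 0)
  calc p.mahlerMeasure ≤ p.sum fun _ a ↦ ‖a‖ := p.mahlerMeasure_le_sum_norm_coeff
    _ ≤ p.support.card • H := Finset.sum_le_card_nsmul _ _ _ fun i _ ↦ h i
    _ ≤ (p.natDegree + 1) * H := by
      rw [nsmul_eq_mul]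
      gcongr
      exact_mod_cast p.card_supp_le_succ_natDegree

theorem abs_coeff_le_choose_mul_mahlerMeasure_of_dvd {g f : ℤ[X]} (hf : f ≠ 0) (hgf : g ∣ f)
    (n : ℕ) :
    (|g.coeff n| : ℝ) ≤ g.natDegree.choose n * (f.map (Int.castRingHom ℂ)).mahlerMeasure := by
  obtain ⟨h, rfl⟩ := hgf
  have hcoeff : (|g.coeff n| : ℝ) = ‖(g.map (Int.castRingHom ℂ)).coeff n‖ := by
    simp [Complex.norm_intCast]
  rw [hcoeff, Polynomial.map_mul,
    ← natDegree_map_eq_of_injective (Int.castRingHom ℂ).injective_int g]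
  exact norm_coeff_le_choose_mul_mahlerMeasure_of_one_le_mahlerMeasure n _ _
    (one_le_mahlerMeasure_of_ne_zero (right_ne_zero_of_mul hf))

end Polynomial

theorem stmt_6_general (m : ℕ) (H : ℤ) (f : Polynomial ℤ) (hf : f ≠ 0)
    (hdeg : f.natDegree = m) (hht : ∀ i, |f.coeff i| ≤ H)
    (μ : Polynomial ℤ) (hdvd : μ ∣ f) :
    ∀ i, |μ.coeff i| ≤ H * 4 ^ m := by
  intro i
  set F := f.map (Int.castRingHom ℂ)
  have hH : (0 : ℝ) ≤ H := by exact_mod_cast (abs_nonneg _).trans (hht 0)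
  have hchoose : (μ.natDegree.choose i : ℝ) ≤ 2 ^ m := by
    have := (μ.natDegree.choose_le_two_pow i).trans
      (Nat.pow_le_pow_right two_pos (hdeg ▸ natDegree_le_of_dvd hdvd hf))
    exact_mod_cast this
  have hF : F.mahlerMeasure ≤ 2 ^ m * H := by
    have hcoeff (j : ℕ) : ‖F.coeff j‖ ≤ H := by
      simpa [F, Complex.norm_intCast] using (Int.cast_le (R := ℝ)).2 (hht j)
    have hsucc : ((m + 1 : ℕ) : ℝ) ≤ 2 ^ m := by exact_mod_cast Nat.lt_two_pow_self
    calc F.mahlerMeasure ≤ (F.natDegree + 1) * H := mahlerMeasure_le_natDegree_add_one_mul hcoeff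
      _ = ((m + 1 : ℕ) : ℝ) * H := by
        rw [natDegree_map_eq_of_injective (Int.castRingHom ℂ).injective_int, hdeg]; push_cast; ring
      _ ≤ 2 ^ m * H := by gcongr
  suffices (|μ.coeff i| : ℝ) ≤ H * 4 ^ m by exact_mod_cast this
  calc (|μ.coeff i| : ℝ) ≤ μ.natDegree.choose i * F.mahlerMeasure :=
        abs_coeff_le_choose_mul_mahlerMeasure_of_dvd hf hdvd i
    _ ≤ 2 ^ m * (2 ^ m * H) := by gcongr; exact mahlerMeasure_nonneg _
    _ = H * 4 ^ m := by rw [show (4 : ℝ) = 2 * 2 by norm_num, mul_pow]; ring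

/-- If `α` is a root of `f ∈ ℤ[X]` of degree `m` with coefficients bounded by `H`, then
the minimal integral polynomial `μ` of `α` (primitive, irreducible, dividing `f`) has
all coefficients of absolute value at most `H * 4^m`. -/
theorem stmt_6 (m : ℕ) (H : ℤ) (f : Polynomial ℤ) (hf : f ≠ 0)
    (hdeg : f.natDegree = m) (hht : ∀ i, |f.coeff i| ≤ H)
    (α : ℂ) (hroot : aeval α f = 0)
    (μ : Polynomial ℤ) (hprim : μ.IsPrimitive) (hirr : Irreducible μ)
    (hμroot : aeval α μ = 0) (hdvd : μ ∣ f) :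
    ∀ i, |μ.coeff i| ≤ H * 4 ^ m :=
  stmt_6_general m H f hf hdeg hht μ hdvd
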